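/- arXiv:math/0703069 — 3 statements merged into one kernel-verified Lean document; each statement's English description precedes it below -/
import Mathlib

section
/- Fix k ≥ 1 and let 𝕊 = S^{2k−1} = {x ∈ ℂ^k : |x|=1} with basepoint e=(1,0,…,0). Let 𝒮 be a collection of subsets of [n]={1,…,n} containing ∅ and closed under taking subsets, and let X_𝒮 = {x ∈ 𝕊^{×n} : {i : x_i ≠ e} ∈ 𝒮}. Then X_𝒮 admits a motion planner with at most z(X_𝒮)+1 local domains; in particular tc(X_𝒮) ≤ z(X_𝒮)+1, where z(X_𝒮) = max{|J|+|K| : J,K ∈ 𝒮 and J ∩ K = ∅}. -/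
/-- The topological complexity of a space `X`: the smallest number `k` such that `X × X`
can be covered by `k` open subsets, on each of which there is a continuous map
`s : U → C([0,1], X)` with `s (x, y) 0 = x` and `s (x, y) 1 = y` (i.e. a continuous
local section of the path fibration `π : PX → X × X`). -/
noncomputable def tc (X : Type*) [TopologicalSpace X] : ℕ :=
  sInf {k : ℕ | ∃ U : Fin k → Set (X × X),
    (∀ i, IsOpen (U i)) ∧ (⋃ i, U i) = Set.univ ∧
    ∀ i, ∃ s : C(U i, C(unitInterval, X)),
      ∀ p : U i, (s p) 0 = (p : X × X).1 ∧ (s p) 1 = (p : X × X).2}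

/-! For a pair `(x, y)` let `T = {i | x i ≠ y i}`; it is the disjoint union of a subset of the
support of `x` and a subset of the support of `y`, so `#T ≤ z`. Coordinates outside `T` are not
antipodal and follow the great arc from `x i` to `y i`; coordinates in `T` are distinct and follow
the arc from `x i` to `-y i` rotated by the phase `exp (iπs)`. The open sets on which `T` is the
set of coordinates where `x` and `y` are furthest apart are disjoint for `T` of the same size, so
their unions over `#T = 0, …, z` are `z + 1` motion-planning domains. Each coordinate is timed so
that up to time `1/2` only coordinates with `x i ≠ e` are off `e`, and from then on only those
with `y i ≠ e`; since `𝒮` is closed under subsets, the path stays in `X_𝒮`.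
-/

open Set Filter Topology Function

lemma continuousAt_apply_of_forall_eq_const {X Y Z : Type*} [TopologicalSpace X]
    [TopologicalSpace Y] [TopologicalSpace Z] {Φ : X → Y → Z} {σ : X → Y} {K : Set Y}
    (hK : IsCompact K) (hσ : ∀ x, σ x ∈ K) {x₀ : X} {z₀ : Z}
    (hΦ : ∀ y ∈ K, ContinuousAt ↿Φ (x₀, y)) (hconst : ∀ y ∈ K, Φ x₀ y = z₀) :
    ContinuousAt (fun x => Φ x (σ x)) x₀ := by
  rw [ContinuousAt, hconst _ (hσ x₀), tendsto_nhds]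
  intro V hV hz₀
  have hK : ∀ᶠ x in 𝓝 x₀, ∀ y ∈ K, Φ x y ∈ V :=
    hK.eventually_forall_of_forall_eventually fun y hy =>
      (hΦ y hy).eventually_mem (hV.mem_nhds (by rw [← hconst y hy] at hz₀; exact hz₀))
  exact hK.mono fun x hx => hx _ (hσ x)

section MotionPlanner

variable {X : Type*} [TopologicalSpace X]

def HasMotionPlanner (U : Set (X × X)) : Prop :=
  ∃ s : C(U, C(unitInterval, X)), ∀ p : U, s p 0 = (p : X × X).1 ∧ s p 1 = (p : X × X).2

lemma tc_le_of_cover {k : ℕ} (U : Fin k → Set (X × X)) (hU : ∀ i, IsOpen (U i))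
    (hcover : ⋃ i, U i = univ) (hplan : ∀ i, HasMotionPlanner (U i)) : tc X ≤ k :=
  Nat.sInf_le ⟨U, hU, hcover, hplan⟩

lemma HasMotionPlanner.of_continuous {U : Set (X × X)} {H : U × unitInterval → X}
    (hH : Continuous H) (h0 : ∀ p, H (p, 0) = (p : X × X).1)
    (h1 : ∀ p, H (p, 1) = (p : X × X).2) : HasMotionPlanner U :=
  ⟨ContinuousMap.curry ⟨H, hH⟩, fun p => ⟨h0 p, h1 p⟩⟩

lemma HasMotionPlanner.iUnion {ι : Type*} {O : ι → Set (X × X)} (hO : ∀ i, IsOpen (O i))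
    (hdisj : Pairwise (Disjoint on O)) (h : ∀ i, HasMotionPlanner (O i)) :
    HasMotionPlanner (⋃ i, O i) := by
  choose s hs using h
  let φ i : C((Subtype.val ⁻¹' O i : Set ↥(⋃ i, O i)), C(unitInterval, X)) :=
    (s i).comp ⟨fun q => ⟨q.1.1, q.2⟩, by fun_prop⟩
  refine ⟨ContinuousMap.liftCover _ φ ?_ ?_, fun p => ?_⟩
  · intro i j x hi hj
    obtain rfl : i = j := hdisj.eq (not_disjoint_iff.2 ⟨x, hi, hj⟩)
    rfl
  · intro x
    obtain ⟨i, hi⟩ := mem_iUnion.1 x.2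
    exact ⟨i, ((hO i).preimage continuous_subtype_val).mem_nhds hi⟩
  · obtain ⟨i, hi⟩ := mem_iUnion.1 p.2
    have hp : p = ((⟨p, hi⟩ : Subtype.val ⁻¹' O i) : ↥(⋃ i, O i)) := rfl
    rw [hp, ContinuousMap.liftCover_coe]
    exact hs i ⟨p, hi⟩

end MotionPlanner

section Schedule

variable {E : Type*} [NormedAddCommGroup E]

/-- A coordinate travelling from `a` to `b` starts at time `w / 2` and arrives at time
`(1 + w) / 2`, where `w = ‖b - e‖ / (‖a - e‖ + ‖b - e‖)`: if `a = e` it has not yet left `e`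
at time `1/2`, and if `b = e` it has already reached `e`. The weight `w` is discontinuous
only at `a = b = e`. -/
noncomputable def schedule (e a b : E) (t : ℝ) : ℝ :=
  projIcc 0 1 zero_le_one (2 * t - ‖b - e‖ / (‖a - e‖ + ‖b - e‖))

lemma schedule_mem (e a b : E) (t : ℝ) : schedule e a b t ∈ Icc (0 : ℝ) 1 :=
  Subtype.prop _

lemma schedule_zero (e a b : E) : schedule e a b 0 = 0 := by
  rw [schedule, projIcc_of_le_left]
  have : 0 ≤ ‖b - e‖ / (‖a - e‖ + ‖b - e‖) := by positivity
  linarith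

lemma schedule_one (e a b : E) : schedule e a b 1 = 1 := by
  rw [schedule, projIcc_of_right_le]
  have : ‖b - e‖ / (‖a - e‖ + ‖b - e‖) ≤ 1 :=
    div_le_one_of_le₀ (le_add_of_nonneg_left (norm_nonneg _)) (by positivity)
  linarith

lemma schedule_of_left_eq {e a b : E} (ha : a = e) (hb : b ≠ e) {t : ℝ} (ht : t ≤ 1 / 2) :
    schedule e a b t = 0 := by
  have hw : ‖b - e‖ / (‖a - e‖ + ‖b - e‖) = 1 := by
    rw [ha, sub_self, norm_zero, zero_add, div_self (norm_ne_zero_iff.2 (sub_ne_zero.2 hb))]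
  rw [schedule, projIcc_of_le_left]
  linarith

lemma schedule_of_right_eq {e a b : E} (hb : b = e) {t : ℝ} (ht : 1 / 2 ≤ t) :
    schedule e a b t = 1 := by
  have hw : ‖b - e‖ / (‖a - e‖ + ‖b - e‖) = 0 := by rw [hb, sub_self, norm_zero, zero_div]
  rw [schedule, projIcc_of_right_le]
  linarith

lemma continuousAt_schedule {e a b : E} (hab : (a, b) ≠ (e, e)) (t : ℝ) :
    ContinuousAt (fun q : (E × E) × ℝ => schedule e q.1.1 q.1.2 q.2) ((a, b), t) := by
  have hden : ‖a - e‖ + ‖b - e‖ ≠ 0 := by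
    intro h
    have ha : ‖a - e‖ = 0 := by linarith [norm_nonneg (a - e), norm_nonneg (b - e)]
    have hb : ‖b - e‖ = 0 := by linarith [norm_nonneg (a - e)]
    rw [norm_eq_zero, sub_eq_zero] at ha hb
    exact hab (by rw [ha, hb])
  refine (continuous_subtype_val.comp continuous_projIcc).continuousAt.comp ?_
  exact (continuousAt_const.mul continuousAt_snd).sub
    ((by fun_prop : Continuous fun q : (E × E) × ℝ => ‖q.1.2 - e‖).continuousAt.div
      (by fun_prop : Continuous fun q : (E × E) × ℝ => ‖q.1.1 - e‖ + ‖q.1.2 - e‖).continuousAt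
      hden)

/-- At `a = b = e`, where the schedule jumps, continuity is rescued by the path `Φ a b`
being constant. -/
lemma continuousAt_comp_schedule {Y : Type*} [TopologicalSpace Y] {Φ : E → E → ℝ → Y}
    {e a b : E} (t : ℝ)
    (hΦ : ∀ s ∈ Icc (0 : ℝ) 1, ContinuousAt (fun q : (E × E) × ℝ => Φ q.1.1 q.1.2 q.2) ((a, b), s))
    (hconst : (a, b) = (e, e) → ∀ s ∈ Icc (0 : ℝ) 1, Φ a b s = Φ a b 0) :
    ContinuousAt (fun q : (E × E) × ℝ => Φ q.1.1 q.1.2 (schedule e q.1.1 q.1.2 q.2))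
      ((a, b), t) := by
  by_cases hab : (a, b) = (e, e)
  · refine continuousAt_apply_of_forall_eq_const (Φ := fun (q : (E × E) × ℝ) s => Φ q.1.1 q.1.2 s)
      isCompact_Icc (fun q => schedule_mem e q.1.1 q.1.2 q.2) (fun s hs => ?_) (hconst hab)
    exact (hΦ s hs).comp (x := (((a, b), t), s))
      (f := fun r : ((E × E) × ℝ) × ℝ => (r.1.1, r.2)) (by fun_prop)
  · exact ContinuousAt.comp (f := fun q : (E × E) × ℝ => (q.1, schedule e q.1.1 q.1.2 q.2))
      (hΦ _ (schedule_mem e a b t)) (continuousAt_fst.prodMk (continuousAt_schedule hab t))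

end Schedule

section Arc

variable {E : Type*} [NormedAddCommGroup E] [NormedSpace ℝ E]

noncomputable def sphereArc (a b : E) (s : ℝ) : E :=
  ‖(1 - s) • a + s • b‖⁻¹ • ((1 - s) • a + s • b)

lemma chord_ne_zero {a b : E} (ha : ‖a‖ = 1) (hb : ‖b‖ = 1) (hab : a ≠ -b) {s : ℝ}
    (hs : s ∈ Icc (0 : ℝ) 1) : (1 - s) • a + s • b ≠ 0 := by
  intro h
  have hnorm : 1 - s = s := by
    simpa [norm_smul, ha, hb, abs_of_nonneg hs.1, abs_of_nonneg (sub_nonneg.2 hs.2)]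
      using congrArg norm (eq_neg_of_add_eq_zero_left h)
  obtain rfl : s = 1 / 2 := by linarith
  have hsum : (1 / 2 : ℝ) • (a + b) = 0 := by
    rw [smul_add]
    convert h using 3
    norm_num
  exact hab (eq_neg_of_add_eq_zero_left ((smul_eq_zero.1 hsum).resolve_left (by norm_num)))

lemma sphereArc_zero {a : E} (ha : ‖a‖ = 1) (b : E) : sphereArc a b 0 = a := by
  simp [sphereArc, ha]

lemma sphereArc_one (a : E) {b : E} (hb : ‖b‖ = 1) : sphereArc a b 1 = b := by
  simp [sphereArc, hb]

lemma sphereArc_self {a : E} (ha : ‖a‖ = 1) (s : ℝ) : sphereArc a a s = a := by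
  rw [sphereArc, ← add_smul, sub_add_cancel, one_smul, ha, inv_one, one_smul]

lemma norm_sphereArc {a b : E} (ha : ‖a‖ = 1) (hb : ‖b‖ = 1) (hab : a ≠ -b) {s : ℝ}
    (hs : s ∈ Icc (0 : ℝ) 1) : ‖sphereArc a b s‖ = 1 := by
  rw [sphereArc, norm_smul, norm_inv, norm_norm,
    inv_mul_cancel₀ (norm_ne_zero_iff.2 (chord_ne_zero ha hb hab hs))]

lemma continuousAt_sphereArc {a b : E} {s : ℝ} (h : (1 - s) • a + s • b ≠ 0) :
    ContinuousAt (fun q : (E × E) × ℝ => sphereArc q.1.1 q.1.2 q.2) ((a, b), s) := by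
  have hchord : Continuous fun q : (E × E) × ℝ => (1 - q.2) • q.1.1 + q.2 • q.1.2 := by
    fun_prop
  exact (hchord.norm.continuousAt.inv₀ (norm_ne_zero_iff.2 h)).smul hchord.continuousAt

noncomputable def arcPath (e a b : E) (t : ℝ) : E :=
  sphereArc a b (schedule e a b t)

lemma arcPath_zero (e : E) {a : E} (ha : ‖a‖ = 1) (b : E) : arcPath e a b 0 = a := by
  rw [arcPath, schedule_zero, sphereArc_zero ha]

lemma arcPath_one (e a : E) {b : E} (hb : ‖b‖ = 1) : arcPath e a b 1 = b := by
  rw [arcPath, schedule_one, sphereArc_one _ hb]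

lemma norm_arcPath (e : E) {a b : E} (ha : ‖a‖ = 1) (hb : ‖b‖ = 1) (hab : a ≠ -b) (t : ℝ) :
    ‖arcPath e a b t‖ = 1 :=
  norm_sphereArc ha hb hab (schedule_mem e a b t)

lemma arcPath_of_left_eq {e a b : E} (he : ‖e‖ = 1) (ha : a = e) {t : ℝ} (ht : t ≤ 1 / 2) :
    arcPath e a b t = e := by
  by_cases hb : b = e
  · rw [arcPath, ha, hb, sphereArc_self he]
  · rw [arcPath, schedule_of_left_eq ha hb ht, sphereArc_zero (ha ▸ he), ha]

lemma arcPath_of_right_eq {e a b : E} (he : ‖e‖ = 1) (hb : b = e) {t : ℝ} (ht : 1 / 2 ≤ t) :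
    arcPath e a b t = e := by
  rw [arcPath, schedule_of_right_eq hb ht, sphereArc_one _ (hb ▸ he), hb]

lemma continuousAt_arcPath (e : E) {a b : E} (ha : ‖a‖ = 1) (hb : ‖b‖ = 1) (hab : a ≠ -b)
    (t : ℝ) : ContinuousAt (fun q : (E × E) × ℝ => arcPath e q.1.1 q.1.2 q.2) ((a, b), t) := by
  refine continuousAt_comp_schedule t
    (fun s hs => continuousAt_sphereArc (chord_ne_zero ha hb hab hs)) fun h s _ => ?_
  obtain ⟨rfl, rfl⟩ := Prod.mk.inj h
  rw [sphereArc_self ha, sphereArc_self ha]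

end Arc

section TwistedArc

variable {E : Type*} [NormedAddCommGroup E] [NormedSpace ℂ E]

/-- The phase `exp (iπs)` runs from `1` to `-1`, so it turns the arc from `a` to `-b`, which
exists as soon as `a ≠ b`, into a path from `a` to `b`. -/
noncomputable def twistedArc (a b : E) (s : ℝ) : E :=
  Complex.exp (↑(Real.pi * s) * Complex.I) • sphereArc a (-b) s

lemma twistedArc_zero {a : E} (ha : ‖a‖ = 1) (b : E) : twistedArc a b 0 = a := by
  simp [twistedArc, sphereArc_zero ha]

lemma twistedArc_one (a : E) {b : E} (hb : ‖b‖ = 1) : twistedArc a b 1 = b := by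
  simp [twistedArc, sphereArc_one _ ((norm_neg b).trans hb), Complex.exp_pi_mul_I]

lemma norm_twistedArc {a b : E} (ha : ‖a‖ = 1) (hb : ‖b‖ = 1) (hab : a ≠ b) {s : ℝ}
    (hs : s ∈ Icc (0 : ℝ) 1) : ‖twistedArc a b s‖ = 1 := by
  rw [twistedArc, norm_smul, Complex.norm_exp_ofReal_mul_I, one_mul]
  exact norm_sphereArc ha ((norm_neg b).trans hb) (by rwa [neg_neg]) hs

lemma continuousAt_twistedArc {a b : E} {s : ℝ} (h : (1 - s) • a + s • -b ≠ 0) :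
    ContinuousAt (fun q : (E × E) × ℝ => twistedArc q.1.1 q.1.2 q.2) ((a, b), s) := by
  have harc : ContinuousAt (fun q : (E × E) × ℝ => sphereArc q.1.1 (-q.1.2) q.2) ((a, b), s) :=
    (continuousAt_sphereArc h).comp (x := ((a, b), s))
      (f := fun q : (E × E) × ℝ => ((q.1.1, -q.1.2), q.2)) (by fun_prop)
  exact (by fun_prop : Continuous fun q : (E × E) × ℝ =>
    Complex.exp (↑(Real.pi * q.2) * Complex.I)).continuousAt.smul harc

noncomputable def twistedPath (e a b : E) (t : ℝ) : E :=
  twistedArc a b (schedule e a b t)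

lemma twistedPath_zero (e : E) {a : E} (ha : ‖a‖ = 1) (b : E) : twistedPath e a b 0 = a := by
  rw [twistedPath, schedule_zero, twistedArc_zero ha]

lemma twistedPath_one (e a : E) {b : E} (hb : ‖b‖ = 1) : twistedPath e a b 1 = b := by
  rw [twistedPath, schedule_one, twistedArc_one _ hb]

lemma norm_twistedPath (e : E) {a b : E} (ha : ‖a‖ = 1) (hb : ‖b‖ = 1) (hab : a ≠ b)
    (t : ℝ) : ‖twistedPath e a b t‖ = 1 :=
  norm_twistedArc ha hb hab (schedule_mem e a b t)

lemma twistedPath_of_left_eq {e a b : E} (he : ‖e‖ = 1) (ha : a = e) (hab : a ≠ b) {t : ℝ}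
    (ht : t ≤ 1 / 2) : twistedPath e a b t = e := by
  rw [twistedPath, schedule_of_left_eq ha (ha ▸ hab.symm) ht, twistedArc_zero (ha ▸ he), ha]

lemma twistedPath_of_right_eq {e a b : E} (he : ‖e‖ = 1) (hb : b = e) {t : ℝ}
    (ht : 1 / 2 ≤ t) : twistedPath e a b t = e := by
  rw [twistedPath, schedule_of_right_eq hb ht, twistedArc_one _ (hb ▸ he), hb]

lemma continuousAt_twistedPath (e : E) {a b : E} (ha : ‖a‖ = 1) (hb : ‖b‖ = 1) (hab : a ≠ b)
    (t : ℝ) :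
    ContinuousAt (fun q : (E × E) × ℝ => twistedPath e q.1.1 q.1.2 q.2) ((a, b), t) := by
  refine continuousAt_comp_schedule t (fun s hs => continuousAt_twistedArc
    (chord_ne_zero ha ((norm_neg b).trans hb) (by rwa [neg_neg]) hs)) fun h => ?_
  obtain ⟨rfl, rfl⟩ := Prod.mk.inj h
  exact absurd rfl hab

end TwistedArc

lemma ncard_setOf_ne_le {ι α : Type*} [Finite ι] {S : Set (Set ι)}
    (hS : ∀ J ∈ S, ∀ K ⊆ J, K ∈ S) {e : α} {x y : ι → α} (hx : {i | x i ≠ e} ∈ S)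
    (hy : {i | y i ≠ e} ∈ S) {z : ℕ}
    (hz : z ∈ upperBounds {m | ∃ J ∈ S, ∃ K ∈ S, Disjoint J K ∧ J.ncard + K.ncard = m}) :
    {i | x i ≠ y i}.ncard ≤ z := by
  set J := {i | x i ≠ y i ∧ y i = e}
  set K := {i | x i ≠ y i ∧ y i ≠ e}
  have hJK : {i | x i ≠ y i} = J ∪ K := by
    ext i
    by_cases hi : y i = e <;> simp [J, K, hi]
  have hdisj : Disjoint J K := disjoint_left.2 fun i hJ hK => hK.2 hJ.2
  rw [hJK, ncard_union_eq hdisj]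
  exact hz ⟨J, hS _ hx _ fun i hi => hi.2 ▸ hi.1, K, hS _ hy _ fun i hi => hi.2, hdisj, rfl⟩

section PlanningDomain

variable {ι E : Type*} [NormedAddCommGroup E]

/-- The last condition makes `T` the set of the `T.ncard` coordinates in which `x` and `y` are
furthest apart. -/
def planningDomain (T : Set ι) : Set ((ι → E) × (ι → E)) :=
  {p | (∀ i ∈ T, p.1 i ≠ p.2 i) ∧ (∀ i ∉ T, p.1 i ≠ -p.2 i) ∧
    ∀ i ∈ T, ∀ j ∉ T, ‖p.1 j - p.2 j‖ < ‖p.1 i - p.2 i‖}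

lemma isOpen_planningDomain [Finite ι] (T : Set ι) : IsOpen (planningDomain (E := E) T) := by
  simp only [planningDomain, ofPred_and, ofPred_forall]
  refine IsOpen.inter ?_ (IsOpen.inter ?_ ?_) <;>
    refine isOpen_iInter_of_finite fun i => isOpen_iInter_of_finite fun _ => ?_
  · exact isOpen_ne_fun (by fun_prop) (by fun_prop)
  · exact isOpen_ne_fun (by fun_prop) (by fun_prop)
  · exact isOpen_iInter_of_finite fun j => isOpen_iInter_of_finite fun _ =>
      isOpen_lt (by fun_prop) (by fun_prop)

lemma disjoint_planningDomain [Finite ι] {T T' : Set ι} (hcard : T.ncard = T'.ncard)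
    (hne : T ≠ T') : Disjoint (planningDomain (E := E) T) (planningDomain T') := by
  obtain ⟨i, hiT, hiT'⟩ := not_subset.1 fun h => hne (eq_of_subset_of_ncard_le h hcard.ge)
  obtain ⟨j, hjT', hjT⟩ := not_subset.1 fun h => hne (eq_of_subset_of_ncard_le h hcard.le).symm
  exact disjoint_left.2 fun p hp hp' => (hp.2.2 i hiT j hjT).asymm (hp'.2.2 j hjT' i hiT')

lemma mem_planningDomain_setOf_ne [NormedSpace ℝ E] {x y : ι → E} (hy : ∀ i, ‖y i‖ = 1) :
    (x, y) ∈ planningDomain {i | x i ≠ y i} := by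
  refine ⟨fun i hi => hi, fun i (hi : ¬x i ≠ y i) => ?_, fun i hi j (hj : ¬x j ≠ y j) => ?_⟩
  · show x i ≠ -y i
    rw [not_not.1 hi]
    intro h
    have h2 : (2 : ℝ) • y i = 0 := by rw [two_smul]; nth_rewrite 1 [h]; exact neg_add_cancel _
    simpa [norm_smul, hy i] using congrArg norm h2
  · show ‖x j - y j‖ < ‖x i - y i‖
    rw [not_not.1 hj, sub_self, norm_zero]
    exact norm_pos_iff.2 (sub_ne_zero.2 hi)

end PlanningDomain

section Subcomplex

variable {ι E : Type*} [NormedAddCommGroup E] [NormedSpace ℂ E]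

def sphereSubcomplex (S : Set (Set ι)) (e : E) : Set (ι → E) :=
  {x | (∀ i, ‖x i‖ = 1) ∧ {i | x i ≠ e} ∈ S}

open Classical in
noncomputable def motionPath (e : E) (T : Set ι) (x y : ι → E) (t : ℝ) : ι → E :=
  fun i => if i ∈ T then twistedPath e (x i) (y i) t else arcPath e (x i) (y i) t

lemma motionPath_zero (e : E) (T : Set ι) {x : ι → E} (hx : ∀ i, ‖x i‖ = 1) (y : ι → E) :
    motionPath e T x y 0 = x := by
  ext1 i
  by_cases hi : i ∈ T
  · simp only [motionPath, hi, if_true, twistedPath_zero e (hx i)]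
  · simp only [motionPath, hi, if_false, arcPath_zero e (hx i)]

lemma motionPath_one (e : E) (T : Set ι) (x : ι → E) {y : ι → E} (hy : ∀ i, ‖y i‖ = 1) :
    motionPath e T x y 1 = y := by
  ext1 i
  by_cases hi : i ∈ T
  · simp only [motionPath, hi, if_true, twistedPath_one e _ (hy i)]
  · simp only [motionPath, hi, if_false, arcPath_one e _ (hy i)]

lemma motionPath_mem {S : Set (Set ι)} (hS : ∀ J ∈ S, ∀ K ⊆ J, K ∈ S) {e : E} (he : ‖e‖ = 1)
    {T : Set ι} {x y : ι → E} (hx : x ∈ sphereSubcomplex S e) (hy : y ∈ sphereSubcomplex S e)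
    (hxy : (x, y) ∈ planningDomain T) (t : ℝ) :
    motionPath e T x y t ∈ sphereSubcomplex S e := by
  refine ⟨fun i => ?_, ?_⟩
  · by_cases hi : i ∈ T
    · simpa [motionPath, hi] using norm_twistedPath e (hx.1 i) (hy.1 i) (hxy.1 i hi) t
    · simpa [motionPath, hi] using norm_arcPath e (hx.1 i) (hy.1 i) (hxy.2.1 i hi) t
  rcases le_total t (1 / 2) with ht | ht
  · refine hS _ hx.2 _ fun i => mt fun hxi => ?_
    by_cases hi : i ∈ T
    · simpa [motionPath, hi] using twistedPath_of_left_eq he hxi (hxy.1 i hi) ht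
    · simpa [motionPath, hi] using arcPath_of_left_eq (b := y i) he hxi ht
  · refine hS _ hy.2 _ fun i => mt fun hyi => ?_
    by_cases hi : i ∈ T
    · simpa [motionPath, hi] using twistedPath_of_right_eq (a := x i) he hyi ht
    · simpa [motionPath, hi] using arcPath_of_right_eq (a := x i) he hyi ht

lemma continuousAt_motionPath (e : E) {T : Set ι} {x y : ι → E} (hx : ∀ i, ‖x i‖ = 1)
    (hy : ∀ i, ‖y i‖ = 1) (hxy : (x, y) ∈ planningDomain T) (t : ℝ) :
    ContinuousAt (fun q : ((ι → E) × (ι → E)) × ℝ => motionPath e T q.1.1 q.1.2 q.2)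
      ((x, y), t) := by
  refine continuousAt_pi.2 fun i => ?_
  have hcoord : Continuous fun q : ((ι → E) × (ι → E)) × ℝ => ((q.1.1 i, q.1.2 i), q.2) := by
    fun_prop
  by_cases hi : i ∈ T
  · simp only [motionPath, hi, ↓reduceIte]
    exact (continuousAt_twistedPath e (hx i) (hy i) (hxy.1 i hi) t).comp (x := ((x, y), t))
      hcoord.continuousAt
  · simp only [motionPath, hi, ↓reduceIte]
    exact (continuousAt_arcPath e (hx i) (hy i) (hxy.2.1 i hi) t).comp (x := ((x, y), t))
      hcoord.continuousAt

lemma hasMotionPlanner_planningDomain {S : Set (Set ι)} (hS : ∀ J ∈ S, ∀ K ⊆ J, K ∈ S)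
    {e : E} (he : ‖e‖ = 1) (T : Set ι) :
    HasMotionPlanner (Prod.map Subtype.val Subtype.val ⁻¹' planningDomain T :
      Set (sphereSubcomplex S e × sphereSubcomplex S e)) := by
  set V : Set (sphereSubcomplex S e × sphereSubcomplex S e) :=
    Prod.map Subtype.val Subtype.val ⁻¹' planningDomain T
  have hend : Continuous fun q : V × unitInterval => ((q.1.1.1.1, q.1.1.2.1), (q.2 : ℝ)) := by
    fun_prop
  refine HasMotionPlanner.of_continuous
    (H := fun q => ⟨motionPath e T q.1.1.1.1 q.1.1.2.1 q.2,
      motionPath_mem hS he q.1.1.1.2 q.1.1.2.2 q.1.2 q.2⟩) ?_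
    (fun p => Subtype.ext (motionPath_zero e T p.1.1.2.1 _))
    (fun p => Subtype.ext (motionPath_one e T _ p.1.2.2.1))
  refine Continuous.subtype_mk (continuous_iff_continuousAt.2 fun q => ?_) _
  exact (continuousAt_motionPath e q.1.1.1.2.1 q.1.1.2.2.1 q.1.2 q.2).comp (x := q)
    hend.continuousAt

end Subcomplex

theorem tc_torus_subcomplex_le_general (k n : ℕ) (hk : 0 < k) (S : Set (Set (Fin n)))
    (hSdc : ∀ J ∈ S, ∀ K ⊆ J, K ∈ S) (z : ℕ)
    (hz : IsGreatest
      {m : ℕ | ∃ J ∈ S, ∃ K ∈ S, Disjoint J K ∧ J.ncard + K.ncard = m} z) :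
    tc {x : Fin n → EuclideanSpace ℂ (Fin k) //
        (∀ i, ‖x i‖ = 1) ∧ {i | x i ≠ EuclideanSpace.single (⟨0, hk⟩ : Fin k) 1} ∈ S}
      ≤ z + 1 := by
  set e : EuclideanSpace ℂ (Fin k) := EuclideanSpace.single ⟨0, hk⟩ 1
  have he : ‖e‖ = 1 := by simp [e]
  let X := sphereSubcomplex S e
  let V (T : Set (Fin n)) : Set (X × X) := Prod.map Subtype.val Subtype.val ⁻¹' planningDomain T
  have hV : ∀ T, IsOpen (V T) := fun T => (isOpen_planningDomain T).preimage (by fun_prop)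
  let U (m : Fin (z + 1)) : Set (X × X) := ⋃ T : {T : Set (Fin n) // T.ncard = m}, V T
  have hcover : ⋃ m, U m = univ := iUnion_eq_univ_iff.2 fun p =>
    ⟨⟨_, Nat.lt_succ_of_le (ncard_setOf_ne_le hSdc p.1.2.2 p.2.2.2 hz.2)⟩,
      mem_iUnion.2 ⟨⟨_, rfl⟩, mem_planningDomain_setOf_ne p.2.2.1⟩⟩
  refine tc_le_of_cover (X := X) U (fun m => isOpen_iUnion fun T => hV T) hcover fun m =>
    HasMotionPlanner.iUnion (fun T => hV T) (fun T T' hTT' => ?_) fun T =>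
      hasMotionPlanner_planningDomain hSdc he T.1
  exact (disjoint_planningDomain (T.2.trans T'.2.symm) (Subtype.coe_injective.ne hTT')).preimage _

/-- **Cohen–Pruidze.**  Fix `k ≥ 1` and let `𝕊 = S^{2k-1} = {x ∈ ℂ^k : ‖x‖ = 1}` with
basepoint `e = (1,0,…,0)`.  Let `𝒮` be a collection of subsets of `[n]` containing `∅` and
closed under taking subsets, and let `X_𝒮 = {x ∈ 𝕊^n : {i : x i ≠ e} ∈ 𝒮}` be the
corresponding subcomplex of the standard CW-decomposition of `𝕊^n`.  Then `X_𝒮`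
admits a motion planner with at most `z(X_𝒮) + 1` local domains; in particular
`tc(X_𝒮) ≤ z(X_𝒮) + 1`, where `z(X_𝒮) = max {|J| + |K| : J, K ∈ 𝒮, J ∩ K = ∅}`. -/
theorem tc_torus_subcomplex_le (k n : ℕ) (hk : 0 < k) (S : Set (Set (Fin n)))
    (hS0 : ∅ ∈ S) (hSdc : ∀ J ∈ S, ∀ K ⊆ J, K ∈ S) (z : ℕ)
    (hz : IsGreatest
      {m : ℕ | ∃ J ∈ S, ∃ K ∈ S, Disjoint J K ∧ J.ncard + K.ncard = m} z) :
    tc {x : Fin n → EuclideanSpace ℂ (Fin k) //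
        (∀ i, ‖x i‖ = 1) ∧ {i | x i ≠ EuclideanSpace.single (⟨0, hk⟩ : Fin k) 1} ∈ S}
      ≤ z + 1 :=
  tc_torus_subcomplex_le_general k n hk S hSdc z hz
end

section
/- Let u = (0,…,0) and v = (1,…,1) in ℂ^k. Let 𝒜 be the arrangement of n+1 hyperplanes in ℂ^n defined by the polynomial Q(𝒜) = y_1 (y_n − 1) ∏_{i=1}^{n−1} (y_i − y_{i+1}), i.e. the hyperplanes y_1 = 0, y_i = y_{i+1} for 1 ≤ i ≤ n−1, and y_n = 1. Then (i) these n+1 hyperplanes are in general position in ℂ^n, and (ii) under the natural identification (ℂ^n)^k ≅ (ℂ^k)^n, the open string configuration space G_n(ℂ^k, u, v) is equal to the complement X^k_𝒜 = (ℂ^n)^k ∖ ⋃_{H∈𝒜} H^k of the redundant subspace arrangement 𝒜^k, where H^k = {(y_1,…,y_k) ∈ (ℂ^n)^k : y_j ∈ H for all j}. -/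
/-- `H` is an affine hyperplane in `ℂ^ℓ`: the level set of a nonzero linear functional. -/
def IsAffineHyperplane {ℓ : ℕ} (H : Set (Fin ℓ → ℂ)) : Prop :=
  ∃ (f : (Fin ℓ → ℂ) →ₗ[ℂ] ℂ) (c : ℂ), f ≠ 0 ∧ H = {x | f x = c}

/-- A family of `m` affine hyperplanes in `ℂ^ℓ` is in general position:
any `p ≤ ℓ` of the hyperplanes intersect in a (nonempty) affine subspace of dimension
`ℓ - p`, and no `ℓ + 1` of the hyperplanes have a common point. -/
def InGeneralPosition {ℓ m : ℕ} (H : Fin m → Set (Fin ℓ → ℂ)) : Prop :=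
  (∀ i, IsAffineHyperplane (H i)) ∧
  (∀ s : Finset (Fin m), s.card ≤ ℓ →
    ∃ A : AffineSubspace ℂ (Fin ℓ → ℂ), (A : Set (Fin ℓ → ℂ)).Nonempty ∧
      Module.finrank ℂ A.direction = ℓ - s.card ∧
      (A : Set (Fin ℓ → ℂ)) = ⋂ i ∈ s, H i) ∧
  (∀ s : Finset (Fin m), s.card = ℓ + 1 → (⋂ i ∈ s, H i) = ∅)

/-- The arrangement of `n + 1` hyperplanes in `ℂ^n` defined by the polynomial
`Q(𝒜) = y₁ (y_n − 1) ∏_{i=1}^{n-1} (y_i − y_{i+1})`: the hyperplanes `y₁ = 0`,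
`y_i = y_{i+1}` for `1 ≤ i ≤ n − 1`, and `y_n = 1`. -/
def stringArrangement (n : ℕ) (hn : 0 < n) : Fin (n + 1) → Set (Fin n → ℂ) := fun i =>
  if h0 : i.val = 0 then {y | y ⟨0, hn⟩ = 0}
  else if hn' : i.val = n then {y | y ⟨n - 1, by omega⟩ = 1}
  else {y | y ⟨i.val - 1, by have := i.isLt; omega⟩ = y ⟨i.val, by have := i.isLt; omega⟩}

noncomputable def gfun (n : ℕ) (hn : 0 < n) : Fin (n + 1) → ((Fin n → ℂ) →ₗ[ℂ] ℂ) := fun i =>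
  if h0 : i.val = 0 then LinearMap.proj ⟨0, hn⟩
  else if hn' : i.val = n then LinearMap.proj ⟨n - 1, by omega⟩
  else LinearMap.proj ⟨i.val - 1, by have := i.isLt; omega⟩
       - LinearMap.proj ⟨i.val, by have := i.isLt; omega⟩

def cvec (n : ℕ) : Fin (n + 1) → ℂ := fun i => if i.val = n then 1 else 0

noncomputable def extb (n : ℕ) (b : Fin (n + 1) → ℂ) (t : ℕ) : ℂ :=
  if h : t < n + 1 then b ⟨t, h⟩ else 0

lemma extb_eq (n : ℕ) (b : Fin (n + 1) → ℂ) (t : ℕ) (h : t < n + 1) :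
    extb n b t = b ⟨t, h⟩ := dif_pos h

noncomputable def sol (n : ℕ) (i0 : Fin (n + 1)) (b : Fin (n + 1) → ℂ) : Fin n → ℂ :=
  fun j =>
    if j.val < i0.val then
      extb n b 0 - ∑ t ∈ Finset.range j.val, extb n b (t + 1)
    else
      ∑ t ∈ Finset.range (n - j.val), extb n b (j.val + 1 + t)

lemma sol_spec (n : ℕ) (hn : 0 < n) (i0 : Fin (n + 1)) (b : Fin (n + 1) → ℂ)
    (i : Fin (n + 1)) (hi : i ≠ i0) : gfun n hn i (sol n i0 b) = b i := by
  unfold gfun sol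
  have hii := i.isLt
  split_ifs with h0 h1
  · have hi0 : 0 < i0.val := by
      rcases Nat.eq_zero_or_pos i0.val with h | h
      · exact absurd (Fin.ext (h0.trans h.symm)) hi
      · exact h
    simp only [LinearMap.proj_apply]
    rw [if_pos hi0]
    simp only [Finset.range_zero, Finset.sum_empty, sub_zero]
    rw [extb_eq n b 0 (by omega)]
    exact congrArg b (Fin.ext h0.symm)
  · have hi0' : i0.val ≠ n := fun h => hi (Fin.ext (h1.trans h.symm))
    have hi0 : i0.val ≤ n := by omega
    simp only [LinearMap.proj_apply]
    rw [if_neg (by omega : ¬ (n - 1 < i0.val))]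
    rw [show n - (n - 1) = 1 by omega, Finset.sum_range_one]
    rw [show n - 1 + 1 + 0 = n by omega, extb_eq n b n (by omega)]
    exact congrArg b (Fin.ext h1.symm)
  · simp only [LinearMap.sub_apply, LinearMap.proj_apply]
    by_cases hc : i.val < i0.val
    · rw [if_pos (by omega : i.val - 1 < i0.val), if_pos (by omega : i.val < i0.val)]
      rw [show i.val = (i.val - 1) + 1 by omega, Finset.sum_range_succ]
      rw [show i.val - 1 + 1 = i.val by omega, extb_eq n b i.val (by omega)]
      rw [show (⟨i.val, by omega⟩ : Fin (n + 1)) = i from Fin.ext rfl]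
      ring
    · have hne : i0.val ≠ i.val := fun h => hi (Fin.ext h.symm)
      rw [if_neg (by omega : ¬ (i.val - 1 < i0.val)), if_neg (by omega : ¬ (i.val < i0.val))]
      rw [show n - (i.val - 1) = (n - i.val) + 1 by omega, Finset.sum_range_succ']
      rw [Finset.sum_congr rfl
        (fun t _ => congrArg (extb n b) (by omega : i.val - 1 + 1 + (t + 1) = i.val + 1 + t))]
      rw [show i.val - 1 + 1 + 0 = i.val by omega, extb_eq n b i.val (by omega)]
      rw [show (⟨i.val, by omega⟩ : Fin (n + 1)) = i from Fin.ext rfl]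
      ring

lemma SA_eq (n : ℕ) (hn : 0 < n) (i : Fin (n + 1)) :
    stringArrangement n hn i = {x : Fin n → ℂ | gfun n hn i x = cvec n i} := by
  unfold stringArrangement gfun cvec
  have hii := i.isLt
  split_ifs with h0 h1 h1
  · omega
  · simp [h0]
  · simp
  · ext x
    simp [sub_eq_zero]

lemma mem_SA_zero (n : ℕ) (hn : 0 < n) (x : Fin n → ℂ) :
    x ∈ stringArrangement n hn ⟨0, by omega⟩ ↔ x ⟨0, hn⟩ = 0 := by
  simp [stringArrangement]

lemma mem_SA_last (n : ℕ) (hn : 0 < n) (x : Fin n → ℂ) :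
    x ∈ stringArrangement n hn ⟨n, by omega⟩ ↔ x ⟨n - 1, by omega⟩ = 1 := by
  simp [stringArrangement, hn.ne']

lemma mem_SA_mid (n : ℕ) (hn : 0 < n) (m : ℕ) (hm : m + 1 < n) (x : Fin n → ℂ) :
    x ∈ stringArrangement n hn ⟨m + 1, by omega⟩ ↔ x ⟨m, by omega⟩ = x ⟨m + 1, hm⟩ := by
  simp only [stringArrangement, Set.mem_setOf_eq]
  rw [dif_neg (by omega), dif_neg (by omega)]
  simp only [Set.mem_setOf_eq, Nat.add_sub_cancel]

lemma gfun_ne_zero (n : ℕ) (hn : 0 < n) (i : Fin (n + 1)) : gfun n hn i ≠ 0 := by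
  intro h
  have hii := i.isLt
  unfold gfun at h
  split_ifs at h with h0 h1
  · have := DFunLike.congr_fun h (Pi.single ⟨0, hn⟩ 1)
    simp at this
  · have := DFunLike.congr_fun h (Pi.single ⟨n - 1, by omega⟩ 1)
    simp at this
  · have := DFunLike.congr_fun h (Pi.single ⟨i.val - 1, by omega⟩ 1)
    simp only [LinearMap.sub_apply, LinearMap.proj_apply, LinearMap.zero_apply] at this
    rw [Pi.single_eq_same, Pi.single_eq_of_ne (by
      intro hcon
      have := Fin.mk.injEq .. ▸ hcon
      simp only [Fin.mk.injEq] at hcon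
      omega)] at this
    simp at this

lemma gp (n : ℕ) (hn : 0 < n) : InGeneralPosition (stringArrangement n hn) := by
  refine ⟨fun i => ⟨gfun n hn i, cvec n i, gfun_ne_zero n hn i, SA_eq n hn i⟩, ?_, ?_⟩
  · intro s hs
    -- find an omitted index
    have hex : ∃ i0 : Fin (n + 1), i0 ∉ s := by
      by_contra hcon
      push_neg at hcon
      have : s = Finset.univ := Finset.eq_univ_iff_forall.mpr hcon
      rw [this, Finset.card_univ, Fintype.card_fin] at hs
      omega
    obtain ⟨i0, hi0⟩ := hex
    set F : (Fin n → ℂ) →ₗ[ℂ] ({ x // x ∈ s } → ℂ) :=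
      LinearMap.pi (fun i => gfun n hn i.val) with hF
    have hsurj : Function.Surjective F := by
      intro t
      refine ⟨sol n i0 (fun i => if h : i ∈ s then t ⟨i, h⟩ else 0), funext fun i => ?_⟩
      rw [hF, LinearMap.pi_apply, sol_spec n hn i0 _ i.val (fun h => hi0 (h ▸ i.2))]
      simp [i.2]
    have hp : ∀ i ∈ s, gfun n hn i (sol n i0 (cvec n)) = cvec n i :=
      fun i hi => sol_spec n hn i0 (cvec n) i (fun h => hi0 (h ▸ hi))
    set p := sol n i0 (cvec n)
    refine ⟨AffineSubspace.mk' p (LinearMap.ker F), ⟨p, AffineSubspace.self_mem_mk' p _⟩, ?_, ?_⟩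
    · rw [AffineSubspace.direction_mk']
      have h1 := LinearMap.finrank_range_add_finrank_ker F
      rw [LinearMap.range_eq_top.mpr hsurj, finrank_top, Module.finrank_pi, Module.finrank_pi,
        Fintype.card_coe, Fintype.card_fin] at h1
      omega
    · ext x
      rw [SetLike.mem_coe, AffineSubspace.mem_mk', Set.mem_iInter₂]
      rw [LinearMap.mem_ker]
      constructor
      · intro h i hi
        have := congrFun h ⟨i, hi⟩
        simp only [hF, LinearMap.pi_apply, Pi.zero_apply] at this
        rw [SA_eq n hn i]
        have hxp : gfun n hn i (x -ᵥ p) = 0 := this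
        rw [vsub_eq_sub, map_sub, hp i hi, sub_eq_zero] at hxp
        exact hxp
      · intro h
        funext i
        simp only [hF, LinearMap.pi_apply, Pi.zero_apply]
        have := h i.val i.2
        rw [SA_eq n hn i.val, Set.mem_setOf_eq] at this
        show gfun n hn i.val (x -ᵥ p) = 0
        rw [vsub_eq_sub, map_sub, hp i.val i.2, this, sub_self]
  · intro s hs
    have hsu : s = Finset.univ := Finset.eq_univ_of_card s (by simp [hs])
    subst hsu
    ext x
    simp only [Set.mem_iInter, Set.mem_empty_iff_false, iff_false, Finset.mem_univ,
      forall_const]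
    intro hx
    have key : ∀ j, ∀ h : j < n, x ⟨j, h⟩ = 0 := by
      intro j
      induction j with
      | zero => intro h; exact (mem_SA_zero n hn x).mp (hx ⟨0, by omega⟩)
      | succ m ih =>
        intro h
        have := (mem_SA_mid n hn m h x).mp (hx ⟨m + 1, by omega⟩)
        rw [← this]
        exact ih (by omega)
    have hlast := (mem_SA_last n hn x).mp (hx ⟨n, by omega⟩)
    rw [key (n - 1) (by omega)] at hlast
    exact zero_ne_one hlast

/-- **Cohen–Pruidze.**  Let `u = (0,…,0)` and `v = (1,…,1)` in `ℂ^k` with `k ≥ 1`.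
(i) The `n + 1` hyperplanes `y₁ = 0`, `y_i = y_{i+1}` (`1 ≤ i ≤ n−1`), `y_n = 1` are in
general position in `ℂ^n`; and (ii) under the identification `(ℂ^n)^k ≅ (ℂ^k)^n`
(sending `y` to the configuration `x` with `x_i = (y_1 i, …, y_k i)`), the open string
configuration space `G_n(ℂ^k, u, v)` is equal to the complement
`X^k_𝒜 = (ℂ^n)^k ∖ ⋃_{H ∈ 𝒜} H^k` of the redundant subspace arrangement `𝒜^k`, where
`H^k = {(y₁,…,y_k) : y_j ∈ H for all j}`. -/
theorem string_space_is_redundant_complement (n k : ℕ) (hn : 0 < n) (hk : 0 < k) :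
    InGeneralPosition (stringArrangement n hn) ∧
    ∀ y : Fin k → (Fin n → ℂ),
      (∀ i, ∃ j, y j ∉ stringArrangement n hn i) ↔
        ((fun j => y j ⟨0, hn⟩) ≠ (fun _ => (0 : ℂ)) ∧
         (fun j => y j ⟨n - 1, by omega⟩) ≠ (fun _ => (1 : ℂ)) ∧
         ∀ (m : ℕ) (hm : m + 1 < n),
           (fun j => y j ⟨m, by omega⟩) ≠ (fun j => y j ⟨m + 1, hm⟩)) := by
  refine ⟨gp n hn, fun y => ?_⟩
  constructor
  · intro h
    refine ⟨?_, ?_, ?_⟩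
    · intro heq
      obtain ⟨j, hj⟩ := h ⟨0, by omega⟩
      exact hj ((mem_SA_zero n hn (y j)).mpr (congrFun heq j))
    · intro heq
      obtain ⟨j, hj⟩ := h ⟨n, by omega⟩
      exact hj ((mem_SA_last n hn (y j)).mpr (congrFun heq j))
    · intro m hm heq
      obtain ⟨j, hj⟩ := h ⟨m + 1, by omega⟩
      exact hj ((mem_SA_mid n hn m hm (y j)).mpr (congrFun heq j))
  · rintro ⟨hA, hB, hC⟩ i
    have hii := i.isLt
    by_cases h0 : i.val = 0
    · obtain ⟨j, hj⟩ := Function.ne_iff.mp hA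
      refine ⟨j, fun hmem => hj ?_⟩
      rw [show i = ⟨0, by omega⟩ from Fin.ext h0] at hmem
      exact (mem_SA_zero n hn (y j)).mp hmem
    · by_cases h1 : i.val = n
      · obtain ⟨j, hj⟩ := Function.ne_iff.mp hB
        refine ⟨j, fun hmem => hj ?_⟩
        rw [show i = ⟨n, by omega⟩ from Fin.ext h1] at hmem
        exact (mem_SA_last n hn (y j)).mp hmem
      · have hm : (i.val - 1) + 1 < n := by omega
        obtain ⟨j, hj⟩ := Function.ne_iff.mp (hC (i.val - 1) hm)
        refine ⟨j, fun hmem => hj ?_⟩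
        rw [show i = ⟨(i.val - 1) + 1, by omega⟩ from Fin.ext (by simp; omega)] at hmem
        exact (mem_SA_mid n hn (i.val - 1) hm (y j)).mp hmem
end

section
/- Let 𝕜 be a field of characteristic zero and let E be the exterior algebra over 𝕜 on generators e_1,…,e_n. Then in E ⊗_𝕜 E, the product ∏_{i=1}^{n} (1 ⊗ e_i − e_i ⊗ 1) is nonzero; since each factor 1 ⊗ e_i − e_i ⊗ 1 lies in the kernel of the multiplication map μ: E ⊗_𝕜 E → E, the zero-divisor cup length of E is at least n. -/
/-!
The algebra map `ε ⊗ id : E ᵍ⊗ E → E`, `a ⊗ b ↦ ε(a) b` with `ε` the augmentation, sends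
`1 ⊗ eᵢ − eᵢ ⊗ 1` to `eᵢ`, hence the product of the zero divisors to `e₁ ∧ ⋯ ∧ eₙ`, which the
determinant detects. For `sSup` to be a genuine supremum the lengths must be bounded: filter
`E ᵍ⊗ E` by total degree; the filtration is multiplicative, vanishes beyond degree `2n`, and the
kernel of `μ` lies in positive degree, so every product of more than `2n` zero divisors is zero.
-/

open scoped TensorProduct

/-- The standard grading of the exterior algebra `E` on `e₁, …, eₙ` over `𝕜`
(realized as `ExteriorAlgebra 𝕜 (𝕜^n)`, with `eᵢ = ι (Pi.single i 1)`). -/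
noncomputable abbrev extGrading (𝕜 : Type*) [Field 𝕜] (n : ℕ) :
    ℕ → Submodule 𝕜 (ExteriorAlgebra 𝕜 (Fin n → 𝕜)) :=
  fun i => ⋀[𝕜]^i (Fin n → 𝕜)

/-- The tensor square `E ⊗[𝕜] E` of the exterior algebra, endowed with its graded
(Koszul-signed) multiplication `(a ⊗ b)(a' ⊗ b') = (-1)^{|a'||b|} (aa') ⊗ (bb')`. -/
noncomputable abbrev extTensorSquare (𝕜 : Type*) [Field 𝕜] (n : ℕ) :=
  (extGrading 𝕜 n) ᵍ⊗[𝕜] (extGrading 𝕜 n)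

/-- The `i`-th generator `eᵢ` of the exterior algebra. -/
noncomputable def extGen (𝕜 : Type*) [Field 𝕜] (n : ℕ) (i : Fin n) :
    ExteriorAlgebra 𝕜 (Fin n → 𝕜) :=
  ExteriorAlgebra.ι 𝕜 (Pi.single i 1)

/-- The multiplication map `μ : E ⊗ E → E`, `μ(a ⊗ b) = a b`, as a linear map on the
graded tensor square. -/
noncomputable def extMul (𝕜 : Type*) [Field 𝕜] (n : ℕ) :
    extTensorSquare 𝕜 n →ₗ[𝕜] ExteriorAlgebra 𝕜 (Fin n → 𝕜) :=
  LinearMap.mul' 𝕜 _ ∘ₗ (GradedTensorProduct.of 𝕜 _ _).symm.toLinearMap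

/-- The zero divisor `ēᵢ = 1 ⊗ eᵢ − eᵢ ⊗ 1` in `E ⊗ E`. -/
noncomputable def extZeroDiv (𝕜 : Type*) [Field 𝕜] (n : ℕ) (i : Fin n) :
    extTensorSquare 𝕜 n :=
  GradedTensorProduct.of 𝕜 _ _
    ((1 : ExteriorAlgebra 𝕜 (Fin n → 𝕜)) ⊗ₜ[𝕜] extGen 𝕜 n i - extGen 𝕜 n i ⊗ₜ[𝕜] 1)

/-- The zero-divisor cup length of `E`: the largest `m` for which there exist `m` elements
of the kernel of the multiplication map `μ : E ⊗ E → E` whose product in `E ⊗ E` is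
nonzero. -/
noncomputable def extZcl (𝕜 : Type*) [Field 𝕜] (n : ℕ) : ℕ :=
  sSup {m : ℕ | ∃ l : List (extTensorSquare 𝕜 n), l.length = m ∧
    (∀ x ∈ l, extMul 𝕜 n x = 0) ∧ l.prod ≠ 0}

namespace GradedTensorProduct

variable {R A B : Type*} [CommRing R] [Ring A] [Ring B] [Algebra R A] [Algebra R B]
  (𝒜 : ℕ → Submodule R A) (ℬ : ℕ → Submodule R B) [GradedAlgebra 𝒜] [GradedAlgebra ℬ]

noncomputable def degreeFiltration (k : ℕ) : Submodule R (𝒜 ᵍ⊗[R] ℬ) :=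
  Submodule.span R {z | ∃ i j, k ≤ i + j ∧ ∃ a ∈ 𝒜 i, ∃ b ∈ ℬ j, a ᵍ⊗ₜ[R] b = z}

variable {𝒜 ℬ} in
theorem tmul_mem_degreeFiltration {k i j : ℕ} (h : k ≤ i + j) {a : A} {b : B}
    (ha : a ∈ 𝒜 i) (hb : b ∈ ℬ j) : a ᵍ⊗ₜ[R] b ∈ degreeFiltration 𝒜 ℬ k :=
  Submodule.subset_span ⟨i, j, h, a, ha, b, hb, rfl⟩

theorem degreeFiltration_antitone : Antitone (degreeFiltration 𝒜 ℬ) :=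
  fun _ _ hkl => Submodule.span_mono fun _ ⟨i, j, h, hab⟩ => ⟨i, j, hkl.trans h, hab⟩

theorem degreeFiltration_zero : degreeFiltration 𝒜 ℬ 0 = ⊤ := by
  refine Submodule.eq_top_iff'.2 fun x => ?_
  obtain ⟨x, rfl⟩ := (of R 𝒜 ℬ).surjective x
  induction x using TensorProduct.induction_on with
  | zero => simp
  | add x y hx hy => rw [map_add]; exact add_mem hx hy
  | tmul a b =>
    induction a using DirectSum.Decomposition.inductionOn 𝒜 with
    | zero => simp
    | add a a' ha ha' => rw [TensorProduct.add_tmul, map_add]; exact add_mem ha ha'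
    | homogeneous a =>
      induction b using DirectSum.Decomposition.inductionOn ℬ with
      | zero => simp
      | add b b' hb hb' => rw [TensorProduct.tmul_add, map_add]; exact add_mem hb hb'
      | homogeneous b => exact tmul_mem_degreeFiltration (Nat.zero_le _) a.2 b.2

theorem degreeFiltration_mul_le (k l : ℕ) :
    degreeFiltration 𝒜 ℬ k * degreeFiltration 𝒜 ℬ l ≤ degreeFiltration 𝒜 ℬ (k + l) := by
  rw [degreeFiltration, degreeFiltration, Submodule.span_mul_span, Submodule.span_le]
  rintro _ ⟨_, ⟨i, j, hk, a, ha, b, hb, rfl⟩, _, ⟨i', j', hl, a', ha', b', hb', rfl⟩, rfl⟩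
  dsimp only
  rw [SetLike.mem_coe, tmul_coe_mul_coe_tmul 𝒜 ℬ a ⟨b, hb⟩ ⟨a', ha'⟩ b', Units.smul_def]
  exact zsmul_mem (tmul_mem_degreeFiltration (by omega) (SetLike.mul_mem_graded ha ha')
    (SetLike.mul_mem_graded hb hb')) _

theorem list_prod_mem_degreeFiltration {l : List (𝒜 ᵍ⊗[R] ℬ)}
    (hl : ∀ x ∈ l, x ∈ degreeFiltration 𝒜 ℬ 1) : l.prod ∈ degreeFiltration 𝒜 ℬ l.length := by
  induction l with
  | nil => simp [degreeFiltration_zero]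
  | cons x l ih =>
    rw [List.prod_cons, List.length_cons, add_comm]
    exact degreeFiltration_mul_le 𝒜 ℬ 1 _ <| Submodule.mul_mem_mul (hl x (by simp))
      (ih fun y hy => hl y (List.mem_cons_of_mem x hy))

theorem degreeFiltration_eq_bot {p q : ℕ} (h𝒜 : ∀ i, p < i → 𝒜 i = ⊥) (hℬ : ∀ j, q < j → ℬ j = ⊥) :
    degreeFiltration 𝒜 ℬ (p + q + 1) = ⊥ := by
  refine Submodule.span_eq_bot.2 ?_
  rintro _ ⟨i, j, hk, a, ha, b, hb, rfl⟩
  rcases Nat.lt_or_ge p i with hi | hj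
  · rw [h𝒜 i hi, Submodule.mem_bot] at ha
    simp [ha]
  · rw [hℬ j (by omega), Submodule.mem_bot] at hb
    simp [hb]

theorem eq_span_one_sup_degreeFiltration_one (h𝒜 : 𝒜 0 = 1) (hℬ : ℬ 0 = 1) :
    (R ∙ 1) ⊔ degreeFiltration 𝒜 ℬ 1 = ⊤ := by
  rw [eq_top_iff, ← degreeFiltration_zero, degreeFiltration, Submodule.span_le]
  rintro _ ⟨i, j, -, a, ha, b, hb, rfl⟩
  rcases Nat.eq_zero_or_pos (i + j) with hij | hij
  · obtain ⟨rfl, rfl⟩ : i = 0 ∧ j = 0 := by omega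
    rw [h𝒜, Submodule.mem_one] at ha
    rw [hℬ, Submodule.mem_one] at hb
    obtain ⟨r, rfl⟩ := ha
    obtain ⟨s, rfl⟩ := hb
    refine Submodule.mem_sup_left (Submodule.mem_span_singleton.2 ⟨r * s, ?_⟩)
    rw [Algebra.algebraMap_eq_smul_one, Algebra.algebraMap_eq_smul_one (A := B)]
    change _ = of R 𝒜 ℬ ((r • 1) ⊗ₜ (s • 1))
    rw [TensorProduct.smul_tmul_smul, map_smul]
    rfl
  · exact Submodule.mem_sup_right (tmul_mem_degreeFiltration hij ha hb)

end GradedTensorProduct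

namespace ExteriorAlgebra

variable {R M : Type*} [CommRing R] [AddCommGroup M] [Module R M]

theorem algebraMapInv_eq_zero_of_mem_exteriorPower {i : ℕ} (hi : i ≠ 0)
    {a : ExteriorAlgebra R M} (ha : a ∈ ⋀[R]^i M) : algebraMapInv a = 0 := by
  obtain ⟨i, rfl⟩ := Nat.exists_eq_succ_of_ne_zero hi
  rw [exteriorPower, pow_succ] at ha
  refine Submodule.mul_induction_on ha (fun x _ y hy => ?_)
    fun x y hx hy => by rw [map_add, hx, hy, add_zero]
  obtain ⟨v, rfl⟩ := hy
  simp [algebraMapInv]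

theorem exteriorPower_eq_bot_of_finrank_lt {K V : Type*} [Field K] [AddCommGroup V] [Module K V]
    [FiniteDimensional K V] {i : ℕ} (hi : Module.finrank K V < i) : ⋀[K]^i V = ⊥ :=
  Submodule.finrank_eq_zero.1 <| by rw [exteriorPower.finrank_eq, Nat.choose_eq_zero_of_lt hi]

theorem ιMulti_basis_ne_zero [Nontrivial R] {n : ℕ} (b : Module.Basis (Fin n) R M) :
    ιMulti R n b ≠ 0 := fun h => by
  have := congrArg (liftAlternating (Function.update 0 n b.det)) h
  rw [liftAlternating_apply_ιMulti, Function.update_self, b.det_self, map_zero] at this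
  exact one_ne_zero this

variable (R M) in
noncomputable def counitTensorId :
    (fun i : ℕ => ⋀[R]^i M) ᵍ⊗[R] (fun i : ℕ => ⋀[R]^i M) →ₐ[R] ExteriorAlgebra R M :=
  GradedTensorProduct.lift _ _ ((Algebra.ofId R (ExteriorAlgebra R M)).comp algebraMapInv)
    (AlgHom.id R (ExteriorAlgebra R M))
    fun i j a b => by
      rcases eq_or_ne i 0 with rfl | hi
      · rw [mul_zero, pow_zero, one_smul]
        exact Algebra.commutes (algebraMapInv (a : ExteriorAlgebra R M)) _
      · simp [algebraMapInv_eq_zero_of_mem_exteriorPower hi a.2]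

theorem counitTensorId_one_tmul_sub_tmul_one (m : M) :
    counitTensorId R M (1 ᵍ⊗ₜ[R] ι R m - ι R m ᵍ⊗ₜ[R] 1) = ι R m := by
  simp [counitTensorId, algebraMapInv]

end ExteriorAlgebra

open ExteriorAlgebra GradedTensorProduct

section ExteriorTensorSquare

variable {𝕜 : Type*} [Field 𝕜] {n : ℕ}

theorem extMul_tmul (a b : ExteriorAlgebra 𝕜 (Fin n → 𝕜)) :
    extMul 𝕜 n (a ᵍ⊗ₜ[𝕜] b) = a * b :=
  rfl

theorem extMul_extZeroDiv (i : Fin n) : extMul 𝕜 n (extZeroDiv 𝕜 n i) = 0 := by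
  rw [extZeroDiv, map_sub, map_sub, extMul_tmul, extMul_tmul, one_mul, mul_one, sub_self]

theorem counitTensorId_list_prod_extZeroDiv :
    counitTensorId 𝕜 (Fin n → 𝕜) (List.ofFn fun i => extZeroDiv 𝕜 n i).prod =
      ιMulti 𝕜 n (Pi.basisFun 𝕜 (Fin n)) := by
  rw [map_list_prod, List.map_ofFn, ιMulti_apply]
  congr 2 with i
  rw [Function.comp_apply, extZeroDiv, map_sub, extGen, Pi.basisFun_apply]
  exact counitTensorId_one_tmul_sub_tmul_one _

theorem algebraMapInv_extMul_eq_zero {x : extTensorSquare 𝕜 n}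
    (hx : x ∈ degreeFiltration (extGrading 𝕜 n) (extGrading 𝕜 n) 1) :
    algebraMapInv (extMul 𝕜 n x) = 0 := by
  induction hx using Submodule.span_induction with
  | mem _ hx =>
    obtain ⟨i, j, hij, a, ha, b, hb, rfl⟩ := hx
    rw [extMul_tmul]
    exact algebraMapInv_eq_zero_of_mem_exteriorPower (by omega) (SetLike.mul_mem_graded ha hb)
  | zero => simp
  | add x y _ _ hx hy => rw [map_add, map_add, hx, hy, add_zero]
  | smul c x _ hx => rw [map_smul, map_smul, hx, smul_zero]

theorem mem_degreeFiltration_one_of_extMul_eq_zero {x : extTensorSquare 𝕜 n}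
    (hx : extMul 𝕜 n x = 0) : x ∈ degreeFiltration (extGrading 𝕜 n) (extGrading 𝕜 n) 1 := by
  have hx' : x ∈ (𝕜 ∙ 1) ⊔ degreeFiltration (extGrading 𝕜 n) (extGrading 𝕜 n) 1 := by
    rw [eq_span_one_sup_degreeFiltration_one (extGrading 𝕜 n) (extGrading 𝕜 n) (pow_zero _)
      (pow_zero _)]
    exact Submodule.mem_top
  obtain ⟨_, hc, w, hw, rfl⟩ := Submodule.mem_sup.1 hx'
  obtain ⟨c, rfl⟩ := Submodule.mem_span_singleton.1 hc
  have hc : c = 0 := by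
    have hμ1 : extMul 𝕜 n 1 = 1 := mul_one 1
    simpa [hμ1, algebraMapInv_extMul_eq_zero hw] using congrArg algebraMapInv hx
  rwa [hc, zero_smul, zero_add]

theorem length_le_of_extMul_eq_zero {l : List (extTensorSquare 𝕜 n)}
    (hl : ∀ x ∈ l, extMul 𝕜 n x = 0) (hprod : l.prod ≠ 0) : l.length ≤ 2 * n := by
  have htop : ∀ i, n < i → extGrading 𝕜 n i = ⊥ := fun i hi =>
    exteriorPower_eq_bot_of_finrank_lt (by rwa [Module.finrank_fin_fun])
  by_contra! hlen
  have hmem := degreeFiltration_antitone _ _ (show n + n + 1 ≤ l.length by omega) <|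
    list_prod_mem_degreeFiltration _ _ fun x hx =>
      mem_degreeFiltration_one_of_extMul_eq_zero (hl x hx)
  rw [degreeFiltration_eq_bot _ _ htop htop, Submodule.mem_bot] at hmem
  exact hprod hmem

end ExteriorTensorSquare

theorem exteriorAlgebra_zcl_ge_general (𝕜 : Type*) [Field 𝕜] (n : ℕ) :
    (List.ofFn fun i : Fin n => extZeroDiv 𝕜 n i).prod ≠ 0 ∧
    (∀ i : Fin n, extMul 𝕜 n (extZeroDiv 𝕜 n i) = 0) ∧
    n ≤ extZcl 𝕜 n := by
  have hprod : (List.ofFn fun i : Fin n => extZeroDiv 𝕜 n i).prod ≠ 0 := fun h =>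
    ιMulti_basis_ne_zero (Pi.basisFun 𝕜 (Fin n)) <| by
      rw [← counitTensorId_list_prod_extZeroDiv, h, map_zero]
  refine ⟨hprod, extMul_extZeroDiv, le_csSup ⟨2 * n, ?_⟩ ⟨_, List.length_ofFn, ?_, hprod⟩⟩
  · rintro _ ⟨l, rfl, hl, hl0⟩
    exact length_le_of_extMul_eq_zero hl hl0
  · simpa [List.mem_ofFn] using extMul_extZeroDiv

/-- **Cohen–Pruidze (cf. Farber–Yuzvinsky).**  Over a field `𝕜` of characteristic zero,
the product `∏ᵢ (1 ⊗ eᵢ − eᵢ ⊗ 1)` of the `n` zero divisors is nonzero in `E ⊗ E`; since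
each factor lies in the kernel of the multiplication map `μ : E ⊗ E → E`, the zero-divisor
cup length of the exterior algebra `E` on `n` generators is at least `n`. -/
theorem exteriorAlgebra_zcl_ge (𝕜 : Type*) [Field 𝕜] [CharZero 𝕜] (n : ℕ) :
    (List.ofFn fun i : Fin n => extZeroDiv 𝕜 n i).prod ≠ 0 ∧
    (∀ i : Fin n, extMul 𝕜 n (extZeroDiv 𝕜 n i) = 0) ∧
    n ≤ extZcl 𝕜 n :=
  exteriorAlgebra_zcl_ge_general 𝕜 n
end
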